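/- arXiv:1807.08950 — 3 statements merged into one kernel-verified Lean document; each statement's English description precedes it below -/
import Mathlib

section
/- Let 𝔖 = (X, 𝒰, φ) be a dynamical system with inputs. Then the following are equivalent: (a) 𝔖 is weakly input-to-state stable, i.e., uniformly globally stable and of weak asymptotic gain; (b) 𝔖 is uniformly globally stable and has the weak limit property; (c) there exist σ, γ ∈ 𝒦 and β : X × 𝒰 × [0,∞) → [0,∞) with β(x₀,u,·) ∈ ℒ for x₀ ≠ 0 such that for all (x₀,u) ∈ X × 𝒰 and all t ≥ 0 one has ‖φ(t,x₀,u)‖ ≤ β(x₀,u,t) + γ(‖u‖_𝒰) and β(x₀,u,t) ≤ σ(‖x₀‖). -/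
open MeasureTheory Filter Set Topology
open scoped ENNReal NNReal

noncomputable section

/-- The class `𝒦` of comparison functions: continuous, strictly increasing functions
`γ : [0,∞) → [0,∞)` with `γ 0 = 0` (modelled on `ℝ` via conditions on `Ici 0`). -/
def ClassK (γ : ℝ → ℝ) : Prop :=
  ContinuousOn γ (Ici 0) ∧ StrictMonoOn γ (Ici 0) ∧ γ 0 = 0 ∧ ∀ r : ℝ, 0 ≤ r → 0 ≤ γ r

/-- The class `𝒦 ∪ {0}`. -/
def ClassKZero (γ : ℝ → ℝ) : Prop := ClassK γ ∨ ∀ r : ℝ, γ r = 0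

/-- The class `ℒ` of comparison functions: continuous, strictly decreasing functions
`β : [0,∞) → [0,∞)` with `β r → 0` as `r → ∞`. -/
def ClassL (β : ℝ → ℝ) : Prop :=
  ContinuousOn β (Ici 0) ∧ StrictAntiOn β (Ici 0) ∧ (∀ r : ℝ, 0 ≤ r → 0 ≤ β r) ∧
    Tendsto β atTop (nhds 0)

/-- A (forward-complete) dynamical system with inputs `𝔖 = (X, 𝒰, φ)`. Inputs are
functions `u : ℝ → U` (only the values on `[0,∞)` matter), `inNorm` is the norm `‖·‖_𝒰`. -/
structure DynSysWithInputs (X : Type*) [NormedAddCommGroup X] (U : Type*) where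
  inputs : Set (ℝ → U)
  inputs_nonempty : inputs.Nonempty
  inNorm : (ℝ → U) → ℝ
  inNorm_nonneg : ∀ u ∈ inputs, 0 ≤ inNorm u
  flow : ℝ → X → (ℝ → U) → X
  shift_mem : ∀ u ∈ inputs, ∀ τ : ℝ, 0 ≤ τ → (fun s => u (s + τ)) ∈ inputs
  shift_norm_le : ∀ u ∈ inputs, ∀ τ : ℝ, 0 ≤ τ → inNorm (fun s => u (s + τ)) ≤ inNorm u
  concat_mem : ∀ u₁ ∈ inputs, ∀ u₂ ∈ inputs, ∀ τ : ℝ, 0 ≤ τ →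
    (fun s => if s < τ then u₁ s else u₂ (s - τ)) ∈ inputs
  flow_zero : ∀ (x₀ : X), ∀ u ∈ inputs, flow 0 x₀ u = x₀
  cocycle : ∀ (x₀ : X), ∀ u ∈ inputs, ∀ s t : ℝ, 0 ≤ s → 0 ≤ t →
    flow (t + s) x₀ u = flow t (flow s x₀ u) (fun r => u (r + s))
  flow_continuous : ∀ (x₀ : X), ∀ u ∈ inputs, ContinuousOn (fun t => flow t x₀ u) (Ici 0)
  causal : ∀ (x₀ : X), ∀ u₁ ∈ inputs, ∀ u₂ ∈ inputs, ∀ τ : ℝ, 0 ≤ τ →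
    (∀ s ∈ Icc (0:ℝ) τ, u₁ s = u₂ s) → ∀ t ∈ Icc (0:ℝ) τ, flow t x₀ u₁ = flow t x₀ u₂

variable {X U : Type*} [NormedAddCommGroup X]

/-- Uniform global stability with explicit gains `σ`, `γ`. -/
def UGSWith (S : DynSysWithInputs X U) (σ γ : ℝ → ℝ) : Prop :=
  ∀ (x₀ : X), ∀ u ∈ S.inputs, ∀ t : ℝ, 0 ≤ t →
    ‖S.flow t x₀ u‖ ≤ σ ‖x₀‖ + γ (S.inNorm u)

/-- Uniform global stability. -/
def UGS (S : DynSysWithInputs X U) : Prop :=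
  ∃ σ γ : ℝ → ℝ, ClassK σ ∧ ClassK γ ∧ UGSWith S σ γ

/-- The weak asymptotic gain property with gain `γ`. -/
def WeakAGWith (S : DynSysWithInputs X U) (γ : ℝ → ℝ) : Prop :=
  ∀ ε : ℝ, 0 < ε → ∀ (x₀ : X), ∀ u ∈ S.inputs, ∃ τ : ℝ, 0 ≤ τ ∧
    ∀ t : ℝ, τ ≤ t → ‖S.flow t x₀ u‖ ≤ ε + γ (S.inNorm u)

/-- The weak asymptotic gain property (for some gain in `𝒦 ∪ {0}`). -/
def WeakAG (S : DynSysWithInputs X U) : Prop :=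
  ∃ γ : ℝ → ℝ, ClassKZero γ ∧ WeakAGWith S γ

/-- The strong asymptotic gain property with gain `γ`. -/
def StrongAGWith (S : DynSysWithInputs X U) (γ : ℝ → ℝ) : Prop :=
  ∀ ε : ℝ, 0 < ε → ∀ (x₀ : X), ∃ τ : ℝ, 0 ≤ τ ∧
    ∀ t : ℝ, τ ≤ t → ∀ u ∈ S.inputs, ‖S.flow t x₀ u‖ ≤ ε + γ (S.inNorm u)

/-- The strong asymptotic gain property. -/
def StrongAG (S : DynSysWithInputs X U) : Prop :=
  ∃ γ : ℝ → ℝ, ClassKZero γ ∧ StrongAGWith S γ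

/-- The uniform asymptotic gain property with gain `γ`. -/
def UniformAGWith (S : DynSysWithInputs X U) (γ : ℝ → ℝ) : Prop :=
  ∀ ε : ℝ, 0 < ε → ∀ r : ℝ, 0 < r → ∃ τ : ℝ, 0 ≤ τ ∧
    ∀ t : ℝ, τ ≤ t → ∀ (x₀ : X), ‖x₀‖ ≤ r → ∀ u ∈ S.inputs,
      ‖S.flow t x₀ u‖ ≤ ε + γ (S.inNorm u)

/-- The uniform asymptotic gain property. -/
def UniformAG (S : DynSysWithInputs X U) : Prop :=
  ∃ γ : ℝ → ℝ, ClassKZero γ ∧ UniformAGWith S γ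

/-- The weak limit property with gain `γ`. -/
def WeakLimitWith (S : DynSysWithInputs X U) (γ : ℝ → ℝ) : Prop :=
  ∀ ε : ℝ, 0 < ε → ∀ (x₀ : X), ∀ u ∈ S.inputs, ∃ τ : ℝ, 0 ≤ τ ∧
    sInf ((fun t => ‖S.flow t x₀ u‖) '' Icc (0:ℝ) τ) ≤ ε + γ (S.inNorm u)

/-- The weak limit property. -/
def WeakLimit (S : DynSysWithInputs X U) : Prop :=
  ∃ γ : ℝ → ℝ, ClassK γ ∧ WeakLimitWith S γ

/-- Weak input-to-state stability. -/
def WeakISS (S : DynSysWithInputs X U) : Prop := UGS S ∧ WeakAG S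

/-- Strong input-to-state stability. -/
def StrongISS (S : DynSysWithInputs X U) : Prop := UGS S ∧ StrongAG S

/-- Uniform input-to-state stability. -/
def UniformISS (S : DynSysWithInputs X U) : Prop := UGS S ∧ UniformAG S

/-!
Under uniform global stability, once a trajectory has come within `ε` of the ball of radius
`γ(‖u‖)` it stays below `σ(ε + γ(‖u‖)) + γ(‖u‖)` forever, since the system can be restarted
there with the shifted input; this turns the weak limit property into a weak asymptotic gain.
For the `𝒦ℒ`-type estimate, the excess `f(s) = max(‖φ(s)‖ - γ(‖u‖), 0)` is bounded by
`σ(‖x₀‖)` and tends to `0`. The sup-convolution `t ↦ sup_{s ≥ 0} (f(s) - (t - s)⁺)` is a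
continuous antitone majorant of `f` with the same bound and limit, and adding
`σ(‖x₀‖) e^{-t}` makes it strictly decreasing.
-/

namespace ClassK

variable {σ γ : ℝ → ℝ}

lemma nonneg (hσ : ClassK σ) {r : ℝ} (hr : 0 ≤ r) : 0 ≤ σ r := hσ.2.2.2 r hr

lemma mono (hσ : ClassK σ) {a b : ℝ} (ha : 0 ≤ a) (hab : a ≤ b) : σ a ≤ σ b :=
  hσ.2.1.monotoneOn ha (ha.trans hab) hab

lemma pos (hσ : ClassK σ) {r : ℝ} (hr : 0 < r) : 0 < σ r := by
  simpa [hσ.2.2.1] using hσ.2.1 self_mem_Ici hr.le hr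

lemma add (hσ : ClassK σ) (hγ : ClassK γ) : ClassK (fun r => σ r + γ r) :=
  ⟨hσ.1.add hγ.1, fun _ ha _ hb hab => add_lt_add (hσ.2.1 ha hb hab) (hγ.2.1 ha hb hab),
    by simp [hσ.2.2.1, hγ.2.2.1], fun _ hr => add_nonneg (hσ.nonneg hr) (hγ.nonneg hr)⟩

lemma id : ClassK (fun r : ℝ => r) :=
  ⟨continuousOn_id, fun _ _ _ _ h => h, rfl, fun _ h => h⟩

lemma comp (hσ : ClassK σ) (hγ : ClassK γ) : ClassK (fun r => σ (γ r)) := by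
  have hmaps : MapsTo γ (Ici 0) (Ici 0) := fun _ hr => hγ.nonneg hr
  exact ⟨hσ.1.comp hγ.1 hmaps, hσ.2.1.comp hγ.2.1 hmaps, by simp [hγ.2.2.1, hσ.2.2.1],
    fun _ hr => hσ.nonneg (hγ.nonneg hr)⟩

lemma two_mul : ClassK (fun r : ℝ => 2 * r) :=
  ⟨(continuous_const_mul 2).continuousOn, fun _ _ _ _ h => by linarith, by simp,
    fun _ hr => by positivity⟩

lemma apply_add_le (hσ : ClassK σ) {a b : ℝ} (ha : 0 ≤ a) (hb : 0 ≤ b) :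
    σ (a + b) ≤ σ (2 * a) + σ (2 * b) := by
  have h2a : 0 ≤ σ (2 * a) := hσ.nonneg (by positivity)
  have h2b : 0 ≤ σ (2 * b) := hσ.nonneg (by positivity)
  rcases le_total a b with hab | hab
  · linarith [hσ.mono (add_nonneg ha hb) (show a + b ≤ 2 * b by linarith)]
  · linarith [hσ.mono (add_nonneg ha hb) (show a + b ≤ 2 * a by linarith)]

lemma exists_pos_lt (hσ : ClassK σ) {ε : ℝ} (hε : 0 < ε) : ∃ δ > 0, σ δ < ε := by
  have hσ0 : Tendsto σ (𝓝[Ici 0] 0) (𝓝 0) := by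
    simpa [ContinuousWithinAt, hσ.2.2.1] using hσ.1 0 self_mem_Ici
  have hlt : ∀ᶠ r in 𝓝[>] 0, σ r < ε :=
    (hσ0.mono_left (nhdsWithin_mono _ Ioi_subset_Ici_self)).eventually (gt_mem_nhds hε)
  obtain ⟨δ, hδ, hδpos⟩ := (hlt.and self_mem_nhdsWithin).exists
  exact ⟨δ, hδpos, hδ⟩

end ClassK

namespace ClassKZero

variable {γ : ℝ → ℝ}

lemma nonneg (hγ : ClassKZero γ) {r : ℝ} (hr : 0 ≤ r) : 0 ≤ γ r := by
  rcases hγ with h | h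
  · exact h.nonneg hr
  · simp [h r]

lemma add_id (hγ : ClassKZero γ) : ClassK (fun r => γ r + r) := by
  rcases hγ with h | h
  · exact h.add ClassK.id
  · simpa [h] using ClassK.id

end ClassKZero

lemma ClassL.add_exp {g : ℝ → ℝ} (hg : Continuous g) (hanti : Antitone g)
    (hg0 : ∀ t, 0 ≤ t → 0 ≤ g t) (hlim : Tendsto g atTop (𝓝 0)) {c : ℝ} (hc : 0 < c) :
    ClassL (fun t => g t + c * Real.exp (-t)) := by
  refine ⟨(hg.add (continuous_const.mul (Real.continuous_exp.comp continuous_neg))).continuousOn,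
    fun a _ b _ hab => ?_, fun t ht => by positivity [hg0 t ht], ?_⟩
  · have : c * Real.exp (-b) < c * Real.exp (-a) := by gcongr
    linarith [hanti hab.le]
  · simpa using hlim.add (Real.tendsto_exp_neg_atTop_nhds_zero.const_mul c)

/-- Penalising `s < t` by `t - s` makes this 1-Lipschitz in `t`; not penalising `s > t` makes it
antitone. -/
def lipschitzEnvelope (f : ℝ → ℝ) (t : ℝ) : ℝ :=
  sSup ((fun s => f s - max (t - s) 0) '' Ici 0)

section lipschitzEnvelope

variable {f : ℝ → ℝ} {M : ℝ}

lemma mem_upperBounds_lipschitzEnvelopeSet (hfM : ∀ s, 0 ≤ s → f s ≤ M) (t : ℝ) :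
    M ∈ upperBounds ((fun s => f s - max (t - s) 0) '' Ici 0) := by
  rintro _ ⟨s, hs, rfl⟩
  linarith [hfM s hs, le_max_right (t - s) 0]

lemma le_lipschitzEnvelope (hfM : ∀ s, 0 ≤ s → f s ≤ M) {t : ℝ} (ht : 0 ≤ t) :
    f t ≤ lipschitzEnvelope f t := by
  have := le_csSup ⟨M, mem_upperBounds_lipschitzEnvelopeSet hfM t⟩
    (mem_image_of_mem _ (mem_Ici.2 ht))
  simpa [lipschitzEnvelope] using this

lemma lipschitzEnvelope_le (hfM : ∀ s, 0 ≤ s → f s ≤ M) (t : ℝ) : lipschitzEnvelope f t ≤ M :=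
  csSup_le (nonempty_Ici.image _) (mem_upperBounds_lipschitzEnvelopeSet hfM t)

lemma lipschitzEnvelope_antitone (hfM : ∀ s, 0 ≤ s → f s ≤ M) :
    Antitone (lipschitzEnvelope f) := by
  intro t₁ t₂ h
  refine csSup_le (nonempty_Ici.image _) ?_
  rintro _ ⟨s, hs, rfl⟩
  have := le_csSup ⟨M, mem_upperBounds_lipschitzEnvelopeSet hfM t₁⟩ (mem_image_of_mem _ hs)
  have : max (t₁ - s) 0 ≤ max (t₂ - s) 0 := max_le_max (by linarith) le_rfl
  dsimp only [lipschitzEnvelope] at *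
  linarith

lemma lipschitzEnvelope_lipschitzWith (hfM : ∀ s, 0 ≤ s → f s ≤ M) :
    LipschitzWith 1 (lipschitzEnvelope f) := by
  refine LipschitzWith.of_le_add fun t₁ t₂ => csSup_le (nonempty_Ici.image _) ?_
  rintro _ ⟨s, hs, rfl⟩
  have := le_csSup ⟨M, mem_upperBounds_lipschitzEnvelopeSet hfM t₂⟩ (mem_image_of_mem _ hs)
  have := (abs_le.1 (abs_max_sub_max_le_abs (t₂ - s) (t₁ - s) 0)).2
  rw [Real.dist_eq, abs_sub_comm]
  rw [sub_sub_sub_cancel_right] at this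
  dsimp only [lipschitzEnvelope] at *
  linarith

lemma tendsto_lipschitzEnvelope (hf0 : ∀ s, 0 ≤ f s) (hfM : ∀ s, 0 ≤ s → f s ≤ M)
    (hf : Tendsto f atTop (𝓝 0)) : Tendsto (lipschitzEnvelope f) atTop (𝓝 0) := by
  refine tendsto_order.2 ⟨fun a ha => ?_, fun a ha => ?_⟩
  · filter_upwards [eventually_ge_atTop 0] with t ht
    exact ha.trans_le ((hf0 t).trans (le_lipschitzEnvelope hfM ht))
  · obtain ⟨τ, hτ⟩ := eventually_atTop.1 ((tendsto_order.1 hf).2 (a / 2) (half_pos ha))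
    filter_upwards [eventually_ge_atTop (τ + M)] with t ht
    refine (csSup_le (nonempty_Ici.image _) ?_).trans_lt (half_lt_self ha)
    rintro _ ⟨s, hs, rfl⟩
    rcases le_total τ s with hs' | hs'
    · linarith [hτ s hs', le_max_right (t - s) 0]
    · linarith [hfM s hs, le_max_left (t - s) 0]

end lipschitzEnvelope

section DynSysWithInputs

variable {S : DynSysWithInputs X U} {σ γ γ' : ℝ → ℝ}

lemma UGSWith.mono_right (h : UGSWith S σ γ) (hγ : ∀ r, 0 ≤ r → γ r ≤ γ' r) :
    UGSWith S σ γ' := fun x₀ u hu t ht =>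
  (h x₀ u hu t ht).trans (add_le_add_right (hγ _ (S.inNorm_nonneg u hu)) _)

lemma WeakAGWith.mono (h : WeakAGWith S γ) (hγ : ∀ r, 0 ≤ r → γ r ≤ γ' r) :
    WeakAGWith S γ' := by
  intro ε hε x₀ u hu
  obtain ⟨τ, hτ, hbound⟩ := h ε hε x₀ u hu
  exact ⟨τ, hτ, fun t ht => (hbound t ht).trans (add_le_add_right (hγ _ (S.inNorm_nonneg u hu)) _)⟩

lemma UGSWith.norm_flow_le_of_le (h : UGSWith S σ γ) (hγ : ClassK γ) (x₀ : X) {u : ℝ → U}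
    (hu : u ∈ S.inputs) {t₀ t : ℝ} (ht₀ : 0 ≤ t₀) (ht : t₀ ≤ t) :
    ‖S.flow t x₀ u‖ ≤ σ ‖S.flow t₀ x₀ u‖ + γ (S.inNorm u) := by
  have hshift := S.shift_mem u hu t₀ ht₀
  have hcocycle := S.cocycle x₀ u hu t₀ (t - t₀) ht₀ (sub_nonneg.2 ht)
  rw [sub_add_cancel] at hcocycle
  rw [hcocycle]
  calc _ ≤ σ ‖S.flow t₀ x₀ u‖ + γ (S.inNorm fun r => u (r + t₀)) :=
        h _ _ hshift _ (sub_nonneg.2 ht)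
    _ ≤ σ ‖S.flow t₀ x₀ u‖ + γ (S.inNorm u) := by
        gcongr
        exact hγ.mono (S.inNorm_nonneg _ hshift) (S.shift_norm_le u hu t₀ ht₀)

lemma WeakAGWith.weakLimitWith (h : WeakAGWith S γ) : WeakLimitWith S γ := by
  intro ε hε x₀ u hu
  obtain ⟨τ, hτ, hbound⟩ := h ε hε x₀ u hu
  refine ⟨τ, hτ, (csInf_le ⟨0, ?_⟩ (mem_image_of_mem _ (right_mem_Icc.2 hτ))).trans
    (hbound τ le_rfl)⟩
  rintro _ ⟨s, -, rfl⟩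
  exact norm_nonneg _

lemma WeakAG.weakLimit (h : WeakAG S) : WeakLimit S := by
  obtain ⟨γ, hγ, hAG⟩ := h
  exact ⟨_, hγ.add_id, (hAG.mono fun r hr => le_add_of_nonneg_right hr).weakLimitWith⟩

lemma WeakLimitWith.exists_norm_flow_lt (h : WeakLimitWith S γ) {ε : ℝ} (hε : 0 < ε) (x₀ : X)
    {u : ℝ → U} (hu : u ∈ S.inputs) : ∃ t₀, 0 ≤ t₀ ∧ ‖S.flow t₀ x₀ u‖ < ε + γ (S.inNorm u) := by
  obtain ⟨τ, hτ, hinf⟩ := h (ε / 2) (half_pos hε) x₀ u hu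
  obtain ⟨_, ⟨t₀, ht₀, rfl⟩, hlt⟩ := exists_lt_of_csInf_lt
    (nonempty_Icc.2 hτ |>.image _)
    (hinf.trans_lt (show ε / 2 + γ (S.inNorm u) < ε + γ (S.inNorm u) by linarith))
  exact ⟨t₀, ht₀.1, hlt⟩

lemma UGSWith.weakAGWith_of_weakLimitWith {γW : ℝ → ℝ} (hσ : ClassK σ) (hγ : ClassK γ)
    (hγW : ClassK γW) (hU : UGSWith S σ γ) (hW : WeakLimitWith S γW) :
    WeakAGWith S (fun r => σ (2 * γW r) + γ r) := by
  intro ε hε x₀ u hu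
  obtain ⟨δ, hδ, hσδ⟩ := hσ.exists_pos_lt hε
  have hc : 0 ≤ γW (S.inNorm u) := hγW.nonneg (S.inNorm_nonneg u hu)
  obtain ⟨t₀, ht₀, hlt⟩ := hW.exists_norm_flow_lt (half_pos hδ) x₀ hu
  refine ⟨t₀, ht₀, fun t ht => ?_⟩
  calc ‖S.flow t x₀ u‖ ≤ σ ‖S.flow t₀ x₀ u‖ + γ (S.inNorm u) :=
        hU.norm_flow_le_of_le hγ x₀ hu ht₀ ht
    _ ≤ σ (δ / 2 + γW (S.inNorm u)) + γ (S.inNorm u) := by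
        gcongr
        exact hσ.mono (norm_nonneg _) hlt.le
    _ ≤ σ (2 * (δ / 2)) + σ (2 * γW (S.inNorm u)) + γ (S.inNorm u) := by
        gcongr
        exact hσ.apply_add_le (half_pos hδ).le hc
    _ ≤ ε + (σ (2 * γW (S.inNorm u)) + γ (S.inNorm u)) := by
        rw [mul_div_cancel₀ _ two_ne_zero]
        linarith

lemma UGS.weakAG_of_weakLimit (hU : UGS S) (hW : WeakLimit S) : WeakAG S := by
  obtain ⟨σ, γ, hσ, hγ, hU⟩ := hU
  obtain ⟨γW, hγW, hW⟩ := hW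
  exact ⟨_, Or.inl ((hσ.comp (ClassK.two_mul.comp hγW)).add hγ),
    hU.weakAGWith_of_weakLimitWith hσ hγ hγW hW⟩

lemma WeakISS.exists_common_gain (h : WeakISS S) :
    ∃ σ γ, ClassK σ ∧ ClassK γ ∧ UGSWith S σ γ ∧ WeakAGWith S γ := by
  obtain ⟨⟨σ, γU, hσ, hγU, hU⟩, γA, hγA, hA⟩ := h
  refine ⟨σ, fun r => γU r + (γA r + r), hσ, hγU.add hγA.add_id,
    hU.mono_right fun r hr => ?_, hA.mono fun r hr => ?_⟩
  · linarith [hγA.nonneg hr]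
  · linarith [hγU.nonneg hr]

/-- Clause (c) of the characterization. -/
def WeakKLEstimate (S : DynSysWithInputs X U) (σ γ : ℝ → ℝ) (β : X → (ℝ → U) → ℝ → ℝ) :
    Prop :=
  (∀ (x₀ : X), ∀ u ∈ S.inputs, x₀ ≠ 0 → ClassL (β x₀ u)) ∧
  (∀ (x₀ : X), ∀ u ∈ S.inputs, ∀ t : ℝ, 0 ≤ t → 0 ≤ β x₀ u t) ∧
  ∀ (x₀ : X), ∀ u ∈ S.inputs, ∀ t : ℝ, 0 ≤ t →
    ‖S.flow t x₀ u‖ ≤ β x₀ u t + γ (S.inNorm u) ∧ β x₀ u t ≤ σ ‖x₀‖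

lemma WeakAGWith.tendsto_excess (h : WeakAGWith S γ) (x₀ : X) {u : ℝ → U}
    (hu : u ∈ S.inputs) :
    Tendsto (fun t => max (‖S.flow t x₀ u‖ - γ (S.inNorm u)) 0) atTop (𝓝 0) := by
  refine tendsto_order.2 ⟨fun a ha => Eventually.of_forall fun t => ha.trans_le
    (le_max_right _ _), fun a ha => ?_⟩
  obtain ⟨τ, -, hbound⟩ := h (a / 2) (half_pos ha) x₀ u hu
  filter_upwards [eventually_ge_atTop τ] with t ht
  exact max_lt (by linarith [hbound t ht]) ha

lemma UGSWith.weakKLEstimate (hσ : ClassK σ) (hU : UGSWith S σ γ) (hA : WeakAGWith S γ) :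
    WeakKLEstimate S (fun r => σ r + σ r) γ fun x₀ u t =>
      lipschitzEnvelope (fun s => max (‖S.flow s x₀ u‖ - γ (S.inNorm u)) 0) t +
        σ ‖x₀‖ * Real.exp (-t) := by
  have hM : ∀ x₀ : X, 0 ≤ σ ‖x₀‖ := fun x₀ => hσ.nonneg (norm_nonneg x₀)
  have hexcess_le : ∀ (x₀ : X), ∀ u ∈ S.inputs, ∀ s, 0 ≤ s →
      max (‖S.flow s x₀ u‖ - γ (S.inNorm u)) 0 ≤ σ ‖x₀‖ := fun x₀ u hu s hs =>
    max_le (by linarith [hU x₀ u hu s hs]) (hM x₀)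
  refine ⟨fun x₀ u hu hx₀ => ?_, fun x₀ u hu t ht => ?_, fun x₀ u hu t ht => ⟨?_, ?_⟩⟩
  · exact ClassL.add_exp (lipschitzEnvelope_lipschitzWith (hexcess_le x₀ u hu)).continuous
      (lipschitzEnvelope_antitone (hexcess_le x₀ u hu))
      (fun t ht => (le_max_right _ _).trans (le_lipschitzEnvelope (hexcess_le x₀ u hu) ht))
      (tendsto_lipschitzEnvelope (fun _ => le_max_right _ _) (hexcess_le x₀ u hu)
        (hA.tendsto_excess x₀ hu))
      (hσ.pos (norm_pos_iff.2 hx₀))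
  · exact add_nonneg ((le_max_right _ _).trans (le_lipschitzEnvelope (hexcess_le x₀ u hu) ht))
      (mul_nonneg (hM x₀) (Real.exp_pos _).le)
  · have := (le_max_left _ _).trans (le_lipschitzEnvelope (hexcess_le x₀ u hu) ht)
    have : 0 ≤ σ ‖x₀‖ * Real.exp (-t) := by positivity [hM x₀]
    linarith
  · have := lipschitzEnvelope_le (hexcess_le x₀ u hu) t
    have : σ ‖x₀‖ * Real.exp (-t) ≤ σ ‖x₀‖ :=
      mul_le_of_le_one_right (hM x₀) (Real.exp_le_one_iff.2 (by linarith))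
    linarith

lemma WeakKLEstimate.weakISS {β : X → (ℝ → U) → ℝ → ℝ} (hσ : ClassK σ) (hγ : ClassK γ)
    (h : WeakKLEstimate S σ γ β) : WeakISS S := by
  obtain ⟨hL, -, hest⟩ := h
  refine ⟨⟨σ, γ, hσ, hγ, fun x₀ u hu t ht => ?_⟩, γ, Or.inl hγ, fun ε hε x₀ u hu => ?_⟩
  · linarith [hest x₀ u hu t ht]
  by_cases hx₀ : x₀ = 0
  · subst hx₀
    refine ⟨0, le_rfl, fun t ht => ?_⟩
    have := hest 0 u hu t ht
    rw [norm_zero, hσ.2.2.1] at this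
    linarith
  · obtain ⟨τ, hτ⟩ := eventually_atTop.1 (((hL x₀ u hu hx₀).2.2.2).eventually (gt_mem_nhds hε))
    refine ⟨max τ 0, le_max_right _ _, fun t ht => ?_⟩
    linarith [(hest x₀ u hu t ((le_max_right _ _).trans ht)).1, hτ t ((le_max_left _ _).trans ht)]

end DynSysWithInputs

/-- Characterization of weak input-to-state stability: `𝔖` is weakly
input-to-state stable iff it is uniformly globally stable and has the weak limit property,
iff there is a `𝒦ℒ`-type estimate `‖φ(t,x₀,u)‖ ≤ β(x₀,u,t) + γ(‖u‖_𝒰)` with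
`β(x₀,u,t) ≤ σ(‖x₀‖)` and `β(x₀,u,·) ∈ ℒ` for `x₀ ≠ 0`. -/
theorem weakISS_characterization (S : DynSysWithInputs X U) :
    (WeakISS S ↔ (UGS S ∧ WeakLimit S)) ∧
    (WeakISS S ↔
      ∃ (σ γ : ℝ → ℝ) (β : X → (ℝ → U) → ℝ → ℝ),
        ClassK σ ∧ ClassK γ ∧
        (∀ (x₀ : X), ∀ u ∈ S.inputs, x₀ ≠ 0 → ClassL (β x₀ u)) ∧
        (∀ (x₀ : X), ∀ u ∈ S.inputs, ∀ t : ℝ, 0 ≤ t → 0 ≤ β x₀ u t) ∧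
        ∀ (x₀ : X), ∀ u ∈ S.inputs, ∀ t : ℝ, 0 ≤ t →
          ‖S.flow t x₀ u‖ ≤ β x₀ u t + γ (S.inNorm u) ∧ β x₀ u t ≤ σ ‖x₀‖) := by
  refine ⟨⟨fun h => ⟨h.1, h.2.weakLimit⟩, fun h => ⟨h.1, h.1.weakAG_of_weakLimit h.2⟩⟩,
    fun h => ?_, fun ⟨σ, γ, β, hσ, hγ, hest⟩ => WeakKLEstimate.weakISS hσ hγ hest⟩
  obtain ⟨σ, γ, hσ, hγ, hU, hA⟩ := h.exists_common_gain
  exact ⟨_, γ, _, hσ.add hσ, hγ, hU.weakKLEstimate hσ hA⟩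
end
end

section
/- Let p ∈ [1,∞) ∪ {∞}, let α : ℝ → [0,∞) satisfy α(0) = 0, and suppose the set 𝒰 := { u ∈ L^p([0,∞),ℝ) : α∘u is locally integrable and ∫₀^∞ α(u(s)) ds = ∞ }, equipped with ‖·‖_𝒰 := ‖·‖_{L^p}, is nonempty. Let X be a Banach space and let (T_t)_{t≥0} be a strongly stable C₀-semigroup on X, and define φ(t,x₀,u) := T_{∫₀^t α(u(s)) ds} x₀ for (t,x₀,u) ∈ [0,∞) × X × 𝒰. Then 𝔖 := (X,𝒰,φ) is a dynamical system with inputs, M := sup_{v ≥ 0} ‖T_v‖ < ∞, 𝔖 is uniformly globally stable (with σ̲(r) = M·r and any γ̲ ∈ 𝒦), and 𝔖 is of weak asymptotic gain 0; in particular 𝔖 is weakly input-to-state stable. -/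
open MeasureTheory Filter Set Topology
open scoped ENNReal NNReal

noncomputable section

variable {X U : Type*} [NormedAddCommGroup X]

/-- The input space of the modulated-linear counterexample: `u ∈ L^p([0,∞),ℝ)` such that
`α ∘ u` is locally integrable on `[0,∞)` but `∫₀^∞ α(u(s)) ds = ∞`. -/
def ModulInputs (p : ℝ≥0∞) (α : ℝ → ℝ) : Set (ℝ → ℝ) :=
  {u | MemLp u p (volume.restrict (Ici (0:ℝ))) ∧
       LocallyIntegrableOn (fun s => α (u s)) (Ici (0:ℝ)) volume ∧
       ∫⁻ s in Ici (0:ℝ), ENNReal.ofReal (α (u s)) = ⊤}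

/-!
The flow is the semigroup evaluated at the time change `V_u(t) = ∫₀^t α(u s) ds`, which is
continuous, nondecreasing and additive along shifts of the input, so the cocycle property is the
semigroup law. Strong stability makes every orbit bounded, hence `sup_{v ≥ 0} ‖T_v‖ < ∞` by the
uniform boundedness principle, which gives uniform global stability. Since `∫₀^∞ α(u) = ∞`, the
time change tends to `∞`, so `T_{V_u(t)} x → 0`: this is the weak asymptotic gain `0`.
-/

section HalfLine

variable {E : Type*} [NormedAddCommGroup E] {p : ℝ≥0∞} {a τ : ℝ}

theorem measurePreserving_add_right_restrict_Ici (a τ : ℝ) :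
    MeasurePreserving (· + τ) (volume.restrict (Ici a)) (volume.restrict (Ici (a + τ))) := by
  simpa using (measurePreserving_add_right volume τ).restrict_preimage
    (measurableSet_Ici (a := a + τ))

theorem memLp_comp_add_right_restrict_Ici {f : ℝ → E} :
    MemLp (fun s => f (s + τ)) p (volume.restrict (Ici a)) ↔
      MemLp f p (volume.restrict (Ici (a + τ))) := by
  rw [← (measurePreserving_add_right_restrict_Ici a τ).map_eq,
    (measurableEmbedding_addRight τ).memLp_map_measure_iff]
  rfl

theorem eLpNorm_comp_add_right_restrict_Ici (f : ℝ → E) :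
    eLpNorm (fun s => f (s + τ)) p (volume.restrict (Ici a)) =
      eLpNorm f p (volume.restrict (Ici (a + τ))) := by
  rw [← (measurePreserving_add_right_restrict_Ici a τ).map_eq,
    (measurableEmbedding_addRight τ).eLpNorm_map_measure]
  rfl

theorem setLIntegral_Ici_comp_add_right (g : ℝ → ℝ≥0∞) :
    ∫⁻ s in Ici a, g (s + τ) = ∫⁻ s in Ici (a + τ), g s :=
  (measurePreserving_add_right_restrict_Ici a τ).lintegral_comp_emb
    (measurableEmbedding_addRight τ) g

theorem locallyIntegrableOn_Ici_iff {f : ℝ → E} {μ : Measure ℝ} :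
    LocallyIntegrableOn f (Ici a) μ ↔ ∀ b, IntegrableOn f (Icc a b) μ := by
  refine ⟨fun hf b => hf.integrableOn_compact_subset Icc_subset_Ici_self isCompact_Icc,
    fun hf => (locallyIntegrableOn_iff isClosed_Ici.isLocallyClosed).2 fun k hk hkc => ?_⟩
  obtain ⟨b, hb⟩ := hkc.bddAbove
  exact (hf b).mono_set fun x hx => ⟨hk hx, hb hx⟩

theorem locallyIntegrableOn_Ici_comp_add_right {f : ℝ → E} :
    LocallyIntegrableOn (fun s => f (s + τ)) (Ici a) ↔ LocallyIntegrableOn f (Ici (a + τ)) := by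
  have key : ∀ b, IntegrableOn (fun s => f (s + τ)) (Icc a b) ↔
      IntegrableOn f (Icc (a + τ) (b + τ)) := fun b => by
    have := (measurePreserving_add_right volume τ).integrableOn_comp_preimage
      (measurableEmbedding_addRight τ) (f := f) (s := Icc (a + τ) (b + τ))
    rwa [preimage_add_const_Icc, add_sub_cancel_right, add_sub_cancel_right] at this
  simp only [locallyIntegrableOn_Ici_iff, key]
  exact ⟨fun hf b => by simpa using hf (b - τ), fun hf b => hf _⟩

theorem locallyIntegrableOn_Ici_ite {f g : ℝ → E}
    (hf : LocallyIntegrableOn f (Ici a)) (hg : LocallyIntegrableOn g (Ici τ)) :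
    LocallyIntegrableOn (fun s => if s < τ then f s else g s) (Ici a) := by
  rw [locallyIntegrableOn_Ici_iff] at *
  intro b
  refine IntegrableOn.mono_set (t := Ico a τ ∪ Icc τ (max b τ)) (IntegrableOn.union ?_ ?_) ?_
  · exact ((hf τ).mono_set Ico_subset_Icc_self).congr_fun (fun s hs => (if_pos hs.2).symm)
      measurableSet_Ico
  · exact (hg (max b τ)).congr_fun (fun s hs => (if_neg (not_lt.2 hs.1)).symm) measurableSet_Icc
  · intro s hs
    by_cases h : s < τ
    · exact Or.inl ⟨hs.1, h⟩
    · exact Or.inr ⟨not_lt.1 h, le_max_of_le_left hs.2⟩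

end HalfLine

section Primitive

variable {E : Type*} [NormedAddCommGroup E] {a b c : ℝ}

theorem MeasureTheory.LocallyIntegrableOn.intervalIntegrable_of_Ici {f : ℝ → E}
    (hf : LocallyIntegrableOn f (Ici a)) (hb : a ≤ b) (hc : a ≤ c) :
    IntervalIntegrable f volume b c :=
  (hf.integrableOn_compact_subset (fun _ hx => (le_min hb hc).trans hx.1)
    isCompact_uIcc).intervalIntegrable

variable [NormedSpace ℝ E]

theorem continuousOn_primitive_Ici {f : ℝ → E} (hf : LocallyIntegrableOn f (Ici a)) :
    ContinuousOn (fun t => ∫ s in a..t, f s) (Ici a) := by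
  intro t ht
  have hle : a ≤ t + 1 := by linarith [mem_Ici.1 ht]
  have hcont := intervalIntegral.continuousOn_primitive_interval'
    (hf.intervalIntegrable_of_Ici le_rfl hle) left_mem_uIcc
  rw [uIcc_of_le hle] at hcont
  refine (hcont t ⟨ht, by linarith⟩).mono_of_mem_nhdsWithin ?_
  rw [← Ici_inter_Iic]
  exact inter_mem_nhdsWithin _ (Iic_mem_nhds (lt_add_one t))

theorem primitive_cocycle {f : ℝ → E} {s t : ℝ} (h₁ : IntervalIntegrable f volume 0 s)
    (h₂ : IntervalIntegrable f volume s (t + s)) :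
    ∫ r in (0:ℝ)..(t + s), f r = (∫ r in (0:ℝ)..t, f (r + s)) + ∫ r in (0:ℝ)..s, f r := by
  rw [intervalIntegral.integral_comp_add_right, zero_add,
    ← intervalIntegral.integral_add_adjacent_intervals h₁ h₂, add_comm]

theorem tendsto_primitive_atTop_of_setLIntegral_Ici_eq_top {f : ℝ → ℝ} (hf₀ : ∀ s, 0 ≤ f s)
    (hf : LocallyIntegrableOn f (Ici a)) (htop : ∫⁻ s in Ici a, ENNReal.ofReal (f s) = ⊤) :
    Tendsto (fun t => ∫ s in a..t, f s) atTop atTop := by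
  have hmono : MonotoneOn (fun t => ∫ s in a..t, f s) (Ici a) := fun s hs t ht hst =>
    intervalIntegral.integral_mono_interval le_rfl hs hst (ae_of_all _ fun x => hf₀ x)
      (hf.intervalIntegrable_of_Ici le_rfl ht)
  refine tendsto_atTop_atTop.2 fun R => ?_
  by_contra! hR
  have hbdd : ∀ t, a ≤ t → ∫ s in a..t, ‖f s‖ ≤ R := fun t ht => by
    obtain ⟨t', htt', hlt⟩ := hR t
    simp only [Real.norm_of_nonneg (hf₀ _)]
    exact (hmono ht (ht.trans htt') htt').trans hlt.le
  have hint : IntegrableOn f (Ioi a) :=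
    integrableOn_Ioi_of_intervalIntegral_norm_bounded R a
      (fun t => (locallyIntegrableOn_Ici_iff.1 hf t).mono_set Ioc_subset_Icc_self) tendsto_id
      ((eventually_ge_atTop a).mono hbdd)
  rw [setLIntegral_congr Ioi_ae_eq_Ici.symm] at htop
  exact hint.lintegral_lt_top.ne htop

theorem setLIntegral_Ici_eq_top_of_le {g : ℝ → ℝ≥0∞} (hab : a ≤ b)
    (hfin : ∫⁻ s in Ico a b, g s ≠ ⊤) (htop : ∫⁻ s in Ici a, g s = ⊤) :
    ∫⁻ s in Ici b, g s = ⊤ := by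
  rw [← Ico_union_Ici_eq_Ici hab, lintegral_union measurableSet_Ici
    (Set.disjoint_left.2 fun _ hx hx' => (not_le.2 hx.2) hx')] at htop
  exact (ENNReal.add_eq_top.1 htop).resolve_left hfin

end Primitive

section ModulInputs

variable {p : ℝ≥0∞} {α : ℝ → ℝ} {u u₁ u₂ : ℝ → ℝ} {τ : ℝ}

theorem eLpNorm_comp_add_right_restrict_Ici_le (u : ℝ → ℝ) (hτ : 0 ≤ τ) :
    eLpNorm (fun s => u (s + τ)) p (volume.restrict (Ici 0)) ≤
      eLpNorm u p (volume.restrict (Ici 0)) := by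
  rw [eLpNorm_comp_add_right_restrict_Ici, zero_add]
  exact eLpNorm_mono_measure u (Measure.restrict_mono (Ici_subset_Ici.2 hτ) le_rfl)

theorem comp_add_right_mem_modulInputs (hu : u ∈ ModulInputs p α) (hτ : 0 ≤ τ) :
    (fun s => u (s + τ)) ∈ ModulInputs p α := by
  obtain ⟨hLp, hloc, htop⟩ := hu
  have hsub : Ici τ ⊆ Ici (0:ℝ) := Ici_subset_Ici.2 hτ
  refine ⟨?_, ?_, ?_⟩
  · rw [memLp_comp_add_right_restrict_Ici, zero_add]
    exact hLp.mono_measure (Measure.restrict_mono hsub le_rfl)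
  · rw [locallyIntegrableOn_Ici_comp_add_right (f := fun s => α (u s)), zero_add]
    exact hloc.mono_set hsub
  · rw [setLIntegral_Ici_comp_add_right (fun s => ENNReal.ofReal (α (u s))), zero_add]
    refine setLIntegral_Ici_eq_top_of_le hτ ?_ htop
    exact ((locallyIntegrableOn_Ici_iff.1 hloc τ).mono_set Ico_subset_Icc_self).lintegral_lt_top.ne

theorem concat_mem_modulInputs (h₁ : u₁ ∈ ModulInputs p α) (h₂ : u₂ ∈ ModulInputs p α)
    (hτ : 0 ≤ τ) : (fun s => if s < τ then u₁ s else u₂ (s - τ)) ∈ ModulInputs p α := by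
  have hsub : Ici τ ⊆ Ici (0:ℝ) := Ici_subset_Ici.2 hτ
  have hshift : ∀ s, u₂ (s - τ) = u₂ (s + -τ) := fun s => by rw [sub_eq_add_neg]
  simp only [ModulInputs, mem_ofPred_eq]
  refine ⟨?_, ?_, ?_⟩
  · have hLp₂ : MemLp (fun s => u₂ (s - τ)) p ((volume.restrict (Ici 0)).restrict (Iio τ)ᶜ) := by
      rw [Measure.restrict_restrict measurableSet_Iio.compl, compl_Iio, inter_eq_left.2 hsub]
      simp only [hshift]
      exact memLp_comp_add_right_restrict_Ici.2 (by simpa using h₂.1)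
    exact (h₁.1.mono_measure Measure.restrict_le_self).piecewise (s := Iio τ)
      measurableSet_Iio hLp₂
  · have hloc₂ : LocallyIntegrableOn (fun s => α (u₂ (s - τ))) (Ici τ) := by
      simp only [hshift]
      exact (locallyIntegrableOn_Ici_comp_add_right (a := τ) (τ := -τ)
        (f := fun s => α (u₂ s))).2 (by simpa using h₂.2.1)
    simpa only [apply_ite α] using locallyIntegrableOn_Ici_ite h₁.2.1 hloc₂
  · refine top_le_iff.1 (le_trans ?_ (lintegral_mono_set hsub))
    have h₂top := setLIntegral_Ici_comp_add_right (a := τ) (τ := -τ)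
      fun s => ENNReal.ofReal (α (u₂ s))
    rw [add_neg_cancel, h₂.2.2] at h₂top
    rw [setLIntegral_congr_fun measurableSet_Ici fun s hs => by rw [if_neg (not_lt.2 hs)]]
    simp only [hshift, h₂top, le_refl]

end ModulInputs

section BoundedSemigroup

theorem ContinuousOn.isBounded_image_Ici_of_tendsto {F : Type*} [PseudoMetricSpace F]
    {f : ℝ → F} {a : ℝ} {y : F} (hf : ContinuousOn f (Ici a)) (hlim : Tendsto f atTop (𝓝 y)) :
    Bornology.IsBounded (f '' Ici a) := by
  obtain ⟨N, hN⟩ := eventually_atTop.1 (hlim.eventually (Metric.ball_mem_nhds y one_pos))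
  have hIcc : IsCompact (f '' Icc a N) :=
    isCompact_Icc.image_of_continuousOn (hf.mono Icc_subset_Ici_self)
  refine (hIcc.isBounded.union (Metric.isBounded_ball (x := y) (r := 1))).subset ?_
  rintro _ ⟨t, ht, rfl⟩
  rcases le_total t N with htN | hNt
  · exact Or.inl ⟨t, ⟨ht, htN⟩, rfl⟩
  · exact Or.inr (hN t hNt)

variable {𝕜 E F : Type*} [NontriviallyNormedField 𝕜] [NormedAddCommGroup E] [NormedSpace 𝕜 E]
  [CompleteSpace E] [NormedAddCommGroup F] [NormedSpace 𝕜 F]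

theorem bddAbove_opNorm_image_Ici_of_tendsto {T : ℝ → E →L[𝕜] F} {L : E → F} {a : ℝ}
    (hcont : ∀ x, ContinuousOn (fun t => T t x) (Ici a))
    (hlim : ∀ x, Tendsto (fun t => T t x) atTop (𝓝 (L x))) :
    BddAbove ((fun v => ‖T v‖) '' Ici a) := by
  obtain ⟨C, hC⟩ := banach_steinhaus (g := fun v : Ici a => T v) fun x => by
    obtain ⟨C, hC⟩ := isBounded_iff_forall_norm_le.1
      ((hcont x).isBounded_image_Ici_of_tendsto (hlim x))
    exact ⟨C, fun v => hC _ ⟨v, v.2, rfl⟩⟩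
  exact ⟨C, forall_mem_image.2 fun v hv => hC ⟨v, hv⟩⟩

end BoundedSemigroup

section Stability

variable {S : DynSysWithInputs X U}

theorem classK_const_mul {c : ℝ} (hc : 0 < c) : ClassK (fun r => c * r) :=
  ⟨(continuous_const_mul c).continuousOn, fun _ _ _ _ h => mul_lt_mul_of_pos_left h hc,
    mul_zero c, fun _ hr => mul_nonneg hc.le hr⟩

theorem classK_id : ClassK id :=
  ⟨continuousOn_id, strictMono_id.strictMonoOn _, rfl, fun _ hr => hr⟩

theorem UGSWith.mono_left {σ σ' γ : ℝ → ℝ} (h : UGSWith S σ γ) (hσ : ∀ r, 0 ≤ r → σ r ≤ σ' r) :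
    UGSWith S σ' γ := fun x u hu t ht =>
  (h x u hu t ht).trans (add_le_add_left (hσ _ (norm_nonneg x)) _)

theorem weakAGWith_zero_of_tendsto
    (h : ∀ x, ∀ u ∈ S.inputs, Tendsto (fun t => S.flow t x u) atTop (𝓝 0)) :
    WeakAGWith S (fun _ => 0) := by
  intro ε hε x u hu
  obtain ⟨N, hN⟩ := Metric.tendsto_atTop.1 (h x u hu) ε hε
  refine ⟨max N 0, le_max_right N 0, fun t ht => ?_⟩
  simpa using (hN t (le_of_max_le_left ht)).le

end Stability

section ModulatedSystem

variable [NormedSpace ℝ X] (p : ℝ≥0∞) (α : ℝ → ℝ) (hαnn : ∀ r, 0 ≤ α r)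
  (hne : (ModulInputs p α).Nonempty) (T : ℝ → X →L[ℝ] X)
  (hT0 : T 0 = ContinuousLinearMap.id ℝ X)
  (hTsem : ∀ s t : ℝ, 0 ≤ s → 0 ≤ t → T (t + s) = (T t).comp (T s))
  (hTcont : ∀ x : X, ContinuousOn (fun t => T t x) (Ici 0))

def modulatedSystem : DynSysWithInputs X ℝ where
  inputs := ModulInputs p α
  inputs_nonempty := hne
  inNorm u := (eLpNorm u p (volume.restrict (Ici 0))).toReal
  inNorm_nonneg _ _ := ENNReal.toReal_nonneg
  flow t x u := T (∫ s in (0:ℝ)..t, α (u s)) x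
  shift_mem _ hu _ hτ := comp_add_right_mem_modulInputs hu hτ
  shift_norm_le u hu _ hτ :=
    ENNReal.toReal_mono hu.1.eLpNorm_ne_top (eLpNorm_comp_add_right_restrict_Ici_le u hτ)
  concat_mem _ h₁ _ h₂ _ hτ := concat_mem_modulInputs h₁ h₂ hτ
  flow_zero x _ _ := by simp [hT0]
  cocycle x u hu s t hs ht := by
    have hloc := hu.2.1
    rw [primitive_cocycle (hloc.intervalIntegrable_of_Ici le_rfl hs)
      (hloc.intervalIntegrable_of_Ici hs (by linarith)),
      hTsem _ _ (intervalIntegral.integral_nonneg hs fun _ _ => hαnn _)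
        (intervalIntegral.integral_nonneg ht fun _ _ => hαnn _)]
    rfl
  flow_continuous x _ hu := (hTcont x).comp (continuousOn_primitive_Ici hu.2.1)
    fun _ ht => intervalIntegral.integral_nonneg ht fun _ _ => hαnn _
  causal x u₁ _ u₂ _ τ _ heq t ht := by
    rw [intervalIntegral.integral_congr fun s hs => ?_]
    rw [uIcc_of_le ht.1] at hs
    rw [heq s ⟨hs.1, hs.2.trans ht.2⟩]

end ModulatedSystem

theorem modulated_linear_weakISS_general
    [NormedSpace ℝ X] [CompleteSpace X]
    (p : ℝ≥0∞)
    (α : ℝ → ℝ) (hαnn : ∀ r : ℝ, 0 ≤ α r)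
    (hne : (ModulInputs p α).Nonempty)
    (T : ℝ → X →L[ℝ] X)
    (hT0 : T 0 = ContinuousLinearMap.id ℝ X)
    (hTsem : ∀ s t : ℝ, 0 ≤ s → 0 ≤ t → T (t + s) = (T t).comp (T s))
    (hTcont : ∀ x : X, ContinuousOn (fun t => T t x) (Ici 0))
    (hTstab : ∀ x : X, Tendsto (fun t => T t x) atTop (nhds 0)) :
    ∃ S : DynSysWithInputs X ℝ,
      S.inputs = ModulInputs p α ∧
      (∀ u : ℝ → ℝ, S.inNorm u = (eLpNorm u p (volume.restrict (Ici (0:ℝ)))).toReal) ∧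
      (∀ (t : ℝ) (x₀ : X) (u : ℝ → ℝ), S.flow t x₀ u = T (∫ s in (0:ℝ)..t, α (u s)) x₀) ∧
      BddAbove ((fun v => ‖T v‖) '' Ici (0:ℝ)) ∧
      (∀ γ : ℝ → ℝ, ClassK γ →
        UGSWith S (fun r => sSup ((fun v => ‖T v‖) '' Ici (0:ℝ)) * r) γ) ∧
      WeakAGWith S (fun _ => 0) ∧
      WeakISS S := by
  set S := modulatedSystem p α hαnn hne T hT0 hTsem hTcont
  set M := sSup ((fun v => ‖T v‖) '' Ici (0:ℝ))
  have hbdd := bddAbove_opNorm_image_Ici_of_tendsto hTcont hTstab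
  have hM : ∀ v, 0 ≤ v → ‖T v‖ ≤ M := fun v hv => le_csSup hbdd ⟨v, hv, rfl⟩
  have hugs : ∀ γ, ClassK γ → UGSWith S (fun r => M * r) γ := fun γ hγ x u hu t ht => by
    have hV : 0 ≤ ∫ s in (0:ℝ)..t, α (u s) :=
      intervalIntegral.integral_nonneg ht fun s _ => hαnn (u s)
    calc ‖S.flow t x u‖ ≤ M * ‖x‖ := (T _).le_of_opNorm_le (hM _ hV) x
      _ ≤ M * ‖x‖ + γ (S.inNorm u) := le_add_of_nonneg_right (hγ.2.2.2 _ (S.inNorm_nonneg u hu))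
  have hag : WeakAGWith S (fun _ => 0) := weakAGWith_zero_of_tendsto fun x u hu =>
    (hTstab x).comp (tendsto_primitive_atTop_of_setLIntegral_Ici_eq_top (fun s => hαnn (u s))
      hu.2.1 hu.2.2)
  have hM₀ : 0 ≤ M := (norm_nonneg _).trans (hM 0 le_rfl)
  have hUGS : UGS S := ⟨_, id, classK_const_mul (by linarith : 0 < M + 1), classK_id,
    (hugs id classK_id).mono_left fun r hr => by nlinarith⟩
  exact ⟨S, rfl, fun _ => rfl, fun _ _ _ => rfl, hbdd, hugs, hag, hUGS,
    _, Or.inr fun _ => rfl, hag⟩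

/-- Let `p ∈ [1,∞]`, `α : ℝ → [0,∞)` with `α 0 = 0` such that `ModulInputs p α`
is nonempty, and let `(T_t)` be a strongly stable `C₀`-semigroup on a Banach space `X`. Then
`φ(t,x₀,u) = T_{∫₀^t α(u(s)) ds} x₀` defines a dynamical system with inputs which is uniformly
globally stable (with `σ̲ = M·r`, `M = sup_{v ≥ 0} ‖T_v‖ < ∞`, and any `γ̲ ∈ 𝒦`) and of weak
asymptotic gain `0`; in particular it is weakly input-to-state stable. -/
theorem modulated_linear_weakISS
    [NormedSpace ℝ X] [CompleteSpace X]
    (p : ℝ≥0∞) (hp : 1 ≤ p)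
    (α : ℝ → ℝ) (hα0 : α 0 = 0) (hαnn : ∀ r : ℝ, 0 ≤ α r)
    (hne : (ModulInputs p α).Nonempty)
    (T : ℝ → X →L[ℝ] X)
    (hT0 : T 0 = ContinuousLinearMap.id ℝ X)
    (hTsem : ∀ s t : ℝ, 0 ≤ s → 0 ≤ t → T (t + s) = (T t).comp (T s))
    (hTcont : ∀ x : X, ContinuousOn (fun t => T t x) (Ici 0))
    (hTstab : ∀ x : X, Tendsto (fun t => T t x) atTop (nhds 0)) :
    ∃ S : DynSysWithInputs X ℝ,
      S.inputs = ModulInputs p α ∧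
      (∀ u : ℝ → ℝ, S.inNorm u = (eLpNorm u p (volume.restrict (Ici (0:ℝ)))).toReal) ∧
      (∀ (t : ℝ) (x₀ : X) (u : ℝ → ℝ), S.flow t x₀ u = T (∫ s in (0:ℝ)..t, α (u s)) x₀) ∧
      BddAbove ((fun v => ‖T v‖) '' Ici (0:ℝ)) ∧
      (∀ γ : ℝ → ℝ, ClassK γ →
        UGSWith S (fun r => sSup ((fun v => ‖T v‖) '' Ici (0:ℝ)) * r) γ) ∧
      WeakAGWith S (fun _ => 0) ∧
      WeakISS S :=
  modulated_linear_weakISS_general p α hαnn hne T hT0 hTsem hTcont hTstab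
end
end

section
/- Let 𝔖 = (X, 𝒰, φ) be a dynamical system with inputs such that 0 ∈ 𝒰 with ‖0‖_𝒰 = 0 and such that the flow decomposes additively: φ(t,x₀,u) = φ(t,x₀,0) + φ(t,0,u) for all t ≥ 0, x₀ ∈ X, u ∈ 𝒰. If 𝔖 is uniformly globally stable with gains σ̲, γ̲ ∈ 𝒦 and of weak asymptotic gain γ̄ for some γ̄ ∈ 𝒦 ∪ {0}, then 𝔖 is of strong asymptotic gain γ̲: for every ε > 0 and x₀ ∈ X there is τ(ε,x₀) ≥ 0 (namely the weak-asymptotic-gain time for (ε, x₀, 0)) such that ‖φ(t,x₀,u)‖ ≤ ε + γ̲(‖u‖_𝒰) for all t ≥ τ(ε,x₀) and all u ∈ 𝒰. In particular, a weakly input-to-state stable system with additively decomposing flow is strongly input-to-state stable. -/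
open MeasureTheory Filter Set Topology
open scoped ENNReal NNReal

noncomputable section

variable {X U : Type*} [NormedAddCommGroup X]

/-!
Split `φ(t,x₀,u) = φ(t,x₀,0) + φ(t,0,u)`. The free response `φ(t,x₀,0)` does not depend on
`u`, and the weak asymptotic gain at the zero input makes it eventually smaller than `ε`
(since `γ̄(‖0‖) = γ̄(0) = 0`). The forced response `φ(t,0,u)` is bounded by `γ̲(‖u‖)` at all
times by uniform global stability, since `σ̲(‖0‖) = 0`.
-/

theorem ClassK.map_zero {γ : ℝ → ℝ} (hγ : ClassK γ) : γ 0 = 0 :=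
  hγ.2.2.1

theorem ClassKZero.map_zero {γ : ℝ → ℝ} (hγ : ClassKZero γ) : γ 0 = 0 :=
  hγ.elim ClassK.map_zero (fun h => h 0)

namespace DynSysWithInputs

variable (S : DynSysWithInputs X U)

theorem norm_flow_zero_le_of_UGSWith {σ γ : ℝ → ℝ} (hUGS : UGSWith S σ γ) (hσ0 : σ 0 = 0)
    {u : ℝ → U} (hu : u ∈ S.inputs) {t : ℝ} (ht : 0 ≤ t) :
    ‖S.flow t 0 u‖ ≤ γ (S.inNorm u) := by
  simpa [hσ0] using hUGS 0 u hu t ht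

theorem exists_norm_flow_le_of_weakAGWith_of_inNorm_eq_zero {γ : ℝ → ℝ}
    (hWAG : WeakAGWith S γ) (hγ0 : γ 0 = 0) {u : ℝ → U} (hu : u ∈ S.inputs)
    (hnorm : S.inNorm u = 0) {ε : ℝ} (hε : 0 < ε) (x₀ : X) :
    ∃ τ : ℝ, 0 ≤ τ ∧ ∀ t : ℝ, τ ≤ t → ‖S.flow t x₀ u‖ ≤ ε := by
  simpa [hnorm, hγ0] using hWAG ε hε x₀ u hu

theorem strongAGWith_of_additive_flow [Zero U]
    (hz : (fun _ : ℝ => (0 : U)) ∈ S.inputs)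
    (hznorm : S.inNorm (fun _ : ℝ => (0 : U)) = 0)
    (hadd : ∀ t : ℝ, 0 ≤ t → ∀ (x₀ : X), ∀ u ∈ S.inputs,
      S.flow t x₀ u = S.flow t x₀ (fun _ : ℝ => (0 : U)) + S.flow t 0 u)
    {σ γ γbar : ℝ → ℝ} (hσ0 : σ 0 = 0) (hUGS : UGSWith S σ γ)
    (hγbar0 : γbar 0 = 0) (hWAG : WeakAGWith S γbar) :
    StrongAGWith S γ := by
  intro ε hε x₀
  obtain ⟨τ, hτ0, hfree⟩ :=
    S.exists_norm_flow_le_of_weakAGWith_of_inNorm_eq_zero hWAG hγbar0 hz hznorm hε x₀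
  refine ⟨τ, hτ0, fun t hτt u hu => ?_⟩
  have ht : 0 ≤ t := hτ0.trans hτt
  calc ‖S.flow t x₀ u‖
      = ‖S.flow t x₀ (fun _ : ℝ => (0 : U)) + S.flow t 0 u‖ := by rw [hadd t ht x₀ u hu]
    _ ≤ ‖S.flow t x₀ (fun _ : ℝ => (0 : U))‖ + ‖S.flow t 0 u‖ := norm_add_le _ _
    _ ≤ ε + γ (S.inNorm u) :=
      add_le_add (hfree t hτt) (S.norm_flow_zero_le_of_UGSWith hUGS hσ0 hu ht)

end DynSysWithInputs

/-- For a dynamical system with inputs whose flow decomposes additively,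
`φ(t,x₀,u) = φ(t,x₀,0) + φ(t,0,u)`, uniform global stability (with gains `σ̲, γ̲`) together
with the weak asymptotic gain property implies the strong asymptotic gain property with
gain `γ̲`; in particular such a system is weakly ISS iff it is strongly ISS. -/
theorem weakISS_implies_strongISS_of_additive_flow
    [Zero U] (S : DynSysWithInputs X U)
    (hz : (fun _ : ℝ => (0 : U)) ∈ S.inputs)
    (hznorm : S.inNorm (fun _ : ℝ => (0 : U)) = 0)
    (hadd : ∀ t : ℝ, 0 ≤ t → ∀ (x₀ : X), ∀ u ∈ S.inputs,
      S.flow t x₀ u = S.flow t x₀ (fun _ : ℝ => (0 : U)) + S.flow t 0 u)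
    (σ γ : ℝ → ℝ) (hσ : ClassK σ) (hγ : ClassK γ) (hUGS : UGSWith S σ γ)
    (γbar : ℝ → ℝ) (hγbar : ClassKZero γbar) (hWAG : WeakAGWith S γbar) :
    StrongAGWith S γ ∧ StrongISS S := by
  have hSAG : StrongAGWith S γ :=
    S.strongAGWith_of_additive_flow hz hznorm hadd hσ.map_zero hUGS hγbar.map_zero hWAG
  exact ⟨hSAG, ⟨σ, γ, hσ, hγ, hUGS⟩, ⟨γ, Or.inl hγ, hSAG⟩⟩
end
end
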